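/- arXiv:2410.09303 — 4 statements merged into one kernel-verified Lean document; each statement's English description precedes it below -/
import Mathlib

section
/- For the BPE tokenizer, a token sequence t₁ᵏ satisfies 𝒳(t₁ᵏ) = ∅ if and only if t₁ᵏ is invalid, i.e., encode(decode(t₁ᵏ)) ≠ t₁ᵏ. -/
variable {A : Type*} [DecidableEq A]

/-- Apply one BPE merge rule `(l, r) ↦ l ++ r` left-to-right, non-overlapping,
to a list of current tokens (each token represented by its byte string). -/
def mergeOne (l r : List A) : List (List A) → List (List A)
  | [] => []
  | [a] => [a]
  | a :: b :: rest =>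
    if a = l ∧ b = r then (l ++ r) :: mergeOne l r rest
    else a :: mergeOne l r (b :: rest)

/-- BPE encoding: start from single-byte tokens and apply the ordered list of
merge rules. -/
def bpeEncode (rules : List (List A × List A)) (x : List A) : List (List A) :=
  rules.foldl (fun toks lr => mergeOne lr.1 lr.2 toks) (x.map fun a => [a])

/-- BPE decoding: concatenate the byte strings of the tokens. -/
def bpeDecode (t : List (List A)) : List A := t.flatten

theorem flatten_map_singleton : ∀ (x : List A), (x.map fun a => [a]).flatten = x
  | [] => rfl
  | a :: l => by simp [flatten_map_singleton l]

theorem mergeOne_flatten (l r : List A) : ∀ s : List (List A),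
    (mergeOne l r s).flatten = s.flatten
  | [] => by simp [mergeOne]
  | [a] => by simp [mergeOne]
  | a :: b :: rest => by
    by_cases h : a = l ∧ b = r
    · simp [mergeOne, h, mergeOne_flatten l r rest, h.1, h.2]
    · simp [mergeOne, h, mergeOne_flatten l r (b :: rest)]

theorem mergeOne_split (l r : List A) : ∀ (s t u : List (List A)),
    mergeOne l r s = t ++ u →
    ∃ t' u', s = t' ++ u' ∧ mergeOne l r t' = t ∧ mergeOne l r u' = u
  | s, [], u, h => ⟨[], s, by simpa [mergeOne] using h⟩
  | [], t₀ :: ts, u, h => by simp [mergeOne] at h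
  | [a], t₀ :: ts, u, h => by
    simp [mergeOne] at h
    obtain ⟨ht, hts, hu⟩ := h
    exact ⟨[a], [], by simp [mergeOne, ht, hts, hu.symm]⟩
  | a :: b :: rest, t₀ :: ts, u, h => by
    by_cases hc : a = l ∧ b = r
    · rw [mergeOne, if_pos hc] at h
      obtain ⟨ht0, hrest⟩ := List.cons_eq_cons.mp h
      obtain ⟨t', u', hsplit, h1, h2⟩ := mergeOne_split l r rest ts u hrest
      refine ⟨a :: b :: t', u', by simp [hsplit], ?_, h2⟩
      rw [mergeOne, if_pos hc, h1, ht0]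
    · rw [mergeOne, if_neg hc] at h
      obtain ⟨ht0, hrest⟩ := List.cons_eq_cons.mp h
      obtain ⟨t', u', hsplit, h1, h2⟩ := mergeOne_split l r (b :: rest) ts u hrest
      refine ⟨a :: t', u', by simp [hsplit], ?_, h2⟩
      cases t' with
      | nil =>
        simp [mergeOne] at h1 ⊢
        exact ⟨ht0, h1⟩
      | cons c t'' =>
        have hcb : c = b := by
          have := hsplit
          simp [List.cons_eq_cons] at this
          exact this.1.symm
        subst hcb
        rw [mergeOne, if_neg hc, h1, ht0]

theorem fold_split : ∀ (rules : List (List A × List A)) (s t u : List (List A)),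
    rules.foldl (fun toks lr => mergeOne lr.1 lr.2 toks) s = t ++ u →
    ∃ t' u', s = t' ++ u' ∧
      rules.foldl (fun toks lr => mergeOne lr.1 lr.2 toks) t' = t ∧
      rules.foldl (fun toks lr => mergeOne lr.1 lr.2 toks) u' = u
  | [], s, t, u, h => ⟨t, u, h, rfl, rfl⟩
  | lr :: rs, s, t, u, h => by
    rw [List.foldl_cons] at h
    obtain ⟨t'', u'', h1, h2, h3⟩ := fold_split rs _ t u h
    obtain ⟨t', u', hs, hm1, hm2⟩ := mergeOne_split lr.1 lr.2 s t'' u'' h1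
    exact ⟨t', u', hs, by rw [List.foldl_cons, hm1]; exact h2,
      by rw [List.foldl_cons, hm2]; exact h3⟩

theorem fold_flatten : ∀ (rules : List (List A × List A)) (s : List (List A)),
    (rules.foldl (fun toks lr => mergeOne lr.1 lr.2 toks) s).flatten = s.flatten
  | [], _ => rfl
  | lr :: rs, s => by
    rw [List.foldl_cons, fold_flatten rs, mergeOne_flatten]

/-- For the BPE tokenizer, a token sequence `t` has `𝒳(t) = ∅` (no byte
sequence's encoding starts with `t`) if and only if `t` is invalid, i.e.
`encode (decode t) ≠ t`. -/
theorem bpe_empty_iff_invalid (rules : List (List A × List A))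
    (t : List (List A)) :
    (∀ x : List A, ¬ t <+: bpeEncode rules x) ↔
      bpeEncode rules (bpeDecode t) ≠ t := by
  constructor
  · intro h heq
    exact h (bpeDecode t) (by rw [heq])
  · intro hne x hpre
    obtain ⟨u, hu⟩ := hpre
    obtain ⟨t', u', hs, h1, h2⟩ := fold_split rules (x.map fun a => [a]) t u hu.symm
    obtain ⟨x₁, x₂, hx, hx1, hx2⟩ := List.map_eq_append_iff.mp hs
    have hdec : bpeDecode t = x₁ := by
      have : t.flatten = t'.flatten := by rw [← h1, fold_flatten]
      rw [bpeDecode, this, ← hx1, flatten_map_singleton]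
    exact hne (by rw [hdec, bpeEncode, hx1, h1])
end

section
/- For the maximal prefix encoding (MPE) tokenizer, a token sequence t₁ᵏ satisfies 𝒳(t₁ᵏ) = ∅ if and only if t₁ᵏ is invalid. -/
variable {A : Type*} [DecidableEq A]

/-- The longest token in the vocabulary `voc` that is a prefix of `x`
(or `[]` if none is). -/
def longestTok (voc : List (List A)) (x : List A) : List A :=
  (voc.filter fun v => decide (v <+: x)).foldl
    (fun best v => if best.length < v.length then v else best) []

/-- Maximal prefix encoding (MPE): greedily and repeatedly take the longest
token in `voc` that is a prefix of the remaining string.  (When no token of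
length `> 1` matches, the next single byte is taken; when the vocabulary
contains all single-byte tokens this is exactly greedy longest-prefix
matching.) -/
def mpeEncode (voc : List (List A)) : List A → List (List A)
  | [] => []
  | a :: rest =>
    let t := longestTok voc (a :: rest)
    let t' := if t.length ≤ 1 then [a] else t
    t' :: mpeEncode voc ((a :: rest).drop t'.length)
termination_by x => x.length
decreasing_by
  simp only [t', List.length_drop, List.length_cons]
  split
  · simp
  · omega

/-- MPE decoding: concatenate the byte strings of the tokens. -/
def mpeDecode (t : List (List A)) : List A := t.flatten

lemma foldl_max_spec (l : List (List A)) (b : List A) :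
    ((l.foldl (fun best v => if best.length < v.length then v else best) b = b ∨
      l.foldl (fun best v => if best.length < v.length then v else best) b ∈ l) ∧
     b.length ≤ (l.foldl (fun best v => if best.length < v.length then v else best) b).length ∧
     ∀ v ∈ l, v.length ≤ (l.foldl (fun best v => if best.length < v.length then v else best) b).length) := by
  induction l generalizing b with
  | nil => simp
  | cons h tl ih =>
    simp only [List.foldl_cons]
    by_cases hc : b.length < h.length
    · simp only [if_pos hc]
      obtain ⟨m, le, all⟩ := ih h
      refine ⟨?_, by omega, ?_⟩
      · rcases m with m | m
        · right; simp [m]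
        · right; simp [m]
      · intro v hv
        rcases List.mem_cons.1 hv with hv | hv
        · subst hv; omega
        · exact all v hv
    · simp only [if_neg hc]
      obtain ⟨m, le, all⟩ := ih b
      refine ⟨?_, le, ?_⟩
      · rcases m with m | m
        · left; exact m
        · right; simp [m]
      · intro v hv
        rcases List.mem_cons.1 hv with hv | hv
        · subst hv; omega
        · exact all v hv

lemma longestTok_prefix (voc : List (List A)) (s : List A) : longestTok voc s <+: s := by
  obtain ⟨m, -, -⟩ := foldl_max_spec (voc.filter fun v => decide (v <+: s)) []
  unfold longestTok
  rcases m with m | m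
  · rw [m]; exact List.nil_prefix
  · have := List.of_mem_filter m
    simpa using this

lemma longestTok_mem (voc : List (List A)) (s : List A) :
    longestTok voc s = [] ∨ longestTok voc s ∈ voc := by
  obtain ⟨m, -, -⟩ := foldl_max_spec (voc.filter fun v => decide (v <+: s)) []
  unfold longestTok
  rcases m with m | m
  · left; exact m
  · right; exact List.mem_of_mem_filter m

lemma longestTok_le (voc : List (List A)) (s v : List A) (hv : v ∈ voc) (hp : v <+: s) :
    v.length ≤ (longestTok voc s).length := by
  obtain ⟨-, -, all⟩ := foldl_max_spec (voc.filter fun v => decide (v <+: s)) []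
  exact all v (List.mem_filter.2 ⟨hv, by simpa using hp⟩)

lemma longestTok_mono (voc : List (List A)) (s x : List A) (h : s <+: x) :
    (longestTok voc s).length ≤ (longestTok voc x).length := by
  rcases longestTok_mem voc s with m | m
  · simp [m]
  · exact longestTok_le voc x _ m ((longestTok_prefix voc s).trans h)

lemma longestTok_eq (voc : List (List A)) (s x : List A) (hs : s <+: x)
    (h : longestTok voc x <+: s) : longestTok voc s = longestTok voc x := by
  have hlen : (longestTok voc s).length = (longestTok voc x).length := by
    have h1 := longestTok_mono voc s x hs
    rcases longestTok_mem voc x with m | m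
    · have h2 : (longestTok voc s).length ≤ 0 := by simpa [m] using h1
      rw [m]
      simp only [List.length_nil]
      omega
    · have := longestTok_le voc s _ m h
      omega
  have p1 : longestTok voc s <+: x := (longestTok_prefix voc s).trans hs
  have p2 : longestTok voc x <+: x := longestTok_prefix voc x
  have := List.prefix_of_prefix_length_le p1 p2 (le_of_eq hlen)
  exact this.eq_of_length hlen

lemma mpe_main (voc : List (List A)) (t : List (List A)) :
    ∀ x : List A, t <+: mpeEncode voc x →
      mpeDecode t <+: x ∧ mpeEncode voc (mpeDecode t) = t := by
  induction t with
  | nil => intro x _; exact ⟨List.nil_prefix, by simp [mpeDecode, mpeEncode]⟩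
  | cons u t' ih =>
    intro x hpre
    match x with
    | [] =>
      rw [show mpeEncode voc ([] : List A) = [] from by rw [mpeEncode]] at hpre
      exact absurd hpre (by simp)
    | a :: rest =>
      rw [mpeEncode] at hpre
      set tok := longestTok voc (a :: rest) with htok
      set u' : List A := if tok.length ≤ 1 then [a] else tok with hu'
      obtain ⟨hu, ht'⟩ : u = u' ∧ t' <+: mpeEncode voc ((a :: rest).drop u'.length) := by
        rcases hpre with ⟨s, hs⟩
        simp only [List.cons_append] at hs
        injection hs with h1 h2
        exact ⟨h1, ⟨s, h2⟩⟩
      obtain ⟨hdec, henc⟩ := ih _ ht'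
      have hu'pre : u' <+: a :: rest := by
        rw [hu']; split
        · exact ⟨rest, rfl⟩
        · exact longestTok_prefix voc _
      have hu'len : 1 ≤ u'.length := by
        rw [hu']; split
        · simp
        · omega
      have hsplit : a :: rest = u' ++ (a :: rest).drop u'.length := by
        obtain ⟨s, hs⟩ := hu'pre
        rw [← hs, List.drop_left]
      have hsform : mpeDecode (u :: t') = u' ++ mpeDecode t' := by
        simp [mpeDecode, hu]
      have hspre : mpeDecode (u :: t') <+: a :: rest := by
        rw [hsplit, hsform]
        exact (List.prefix_append_right_inj u').2 hdec
      refine ⟨hspre, ?_⟩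
      obtain ⟨b, l, hbl⟩ : ∃ b l, u' = b :: l := by
        cases h : u' with
        | nil => rw [h] at hu'len; simp at hu'len
        | cons b l => exact ⟨b, l, rfl⟩
      have hba : b = a := by
        rw [hbl] at hu'pre
        exact (List.cons_prefix_cons.mp hu'pre).1
      have hS : mpeDecode (u :: t') = b :: (l ++ mpeDecode t') := by
        rw [hsform, hbl]; rfl
      rw [hS, mpeEncode]
      have hS' : b :: (l ++ mpeDecode t') = u' ++ mpeDecode t' := by rw [hbl]; rfl
      have hspre' : b :: (l ++ mpeDecode t') <+: a :: rest := hS ▸ hspre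
      by_cases htl : tok.length ≤ 1
      · -- u' = [a], so b = a, l = []
        have hua : u' = [a] := by rw [hu', if_pos htl]
        have hl : l = [] := by
          rw [hbl] at hua
          exact (List.cons_eq_cons.mp hua).2
        have htok2 : (longestTok voc (b :: (l ++ mpeDecode t'))).length ≤ 1 :=
          le_trans (longestTok_mono voc _ _ hspre') htl
        simp only [if_pos htok2]
        have hd : List.drop ([b] : List A).length (b :: (l ++ mpeDecode t')) = mpeDecode t' := by
          simp [hl]
        rw [hd, henc, hu, hua, hba]
      · -- u' = tok
        have hua : u' = tok := by rw [hu', if_neg htl]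
        have htokpre : tok <+: b :: (l ++ mpeDecode t') := by
          rw [hS', hua]; exact List.prefix_append _ _
        have htok2 : longestTok voc (b :: (l ++ mpeDecode t')) = tok :=
          longestTok_eq voc _ _ hspre' htokpre
        rw [htok2]
        rw [if_neg htl]
        have hdrop : (b :: (l ++ mpeDecode t')).drop tok.length = mpeDecode t' := by
          rw [hS', hua, List.drop_left]
        rw [hdrop, henc, hu, hua]

/-- For the MPE tokenizer (with a vocabulary containing the alphabet), a token
sequence `t` has `𝒳(t) = ∅` (no byte sequence's encoding starts with `t`) if
and only if `t` is invalid, i.e. `encode (decode t) ≠ t`. -/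
theorem mpe_empty_iff_invalid (voc : List (List A)) (hvoc : ∀ a : A, [a] ∈ voc)
    (t : List (List A)) :
    (∀ x : List A, ¬ t <+: mpeEncode voc x) ↔
      mpeEncode voc (mpeDecode t) ≠ t := by
  constructor
  · intro h he
    exact h (mpeDecode t) (by rw [he])
  · intro h x hx
    exact h (mpe_main voc t x hx).2
end

section
/- Consider the two-state Markov chain with states A, B and transition probabilities P(next=A|A)=α, P(next=B|A)=1−α, P(next=A|B)=β, P(next=B|B)=1−β, tokenized by BPE/MPE with vocabulary {A, B, AA} (merge A,A→AA). Then in the induced token process, P(t₂ = A | t₁ = AA) + P(t₂ = AA | t₁ = AA), the probability that the next byte after token AA is A, equals α, i.e., no tokenization bias occurs after token AA. -/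
/-! Two-state Markov chain on the alphabet `{A, B}` (encoded as `Bool`, with
`true = A`, `false = B`), tokenized with vocabulary `{A, B, AA}` where
consecutive `A`s are greedily merged left-to-right into the token `AA`. -/

/-- Transition probabilities of the byte-level chain:
`P(next = A | A) = α`, `P(next = B | A) = 1 - α`,
`P(next = A | B) = β`, `P(next = B | B) = 1 - β`. -/
def step (α β : ℝ) (s s' : Bool) : ℝ :=
  if s then (if s' then α else 1 - α) else (if s' then β else 1 - β)

/-- Probability that, starting from current symbol `s`, the chain continues
with exactly the word `w`. -/
def contProb (α β : ℝ) : Bool → List Bool → ℝ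
  | _, [] => 1
  | s, b :: rest => step α β s b * contProb α β b rest

/-- Probability of a byte word under the chain with initial distribution `π`. -/
def seqProb (π : Bool → ℝ) (α β : ℝ) : List Bool → ℝ
  | [] => 1
  | b :: rest => π b * contProb α β b rest

/-- Greedy tokenization with vocabulary `{A, B, AA}`: consecutive pairs of `A`s
are merged left-to-right into the token `AA = [true, true]`. -/
def tokAB : List Bool → List (List Bool)
  | [] => []
  | true :: true :: rest => [true, true] :: tokAB rest
  | b :: rest => [b] :: tokAB rest

/-- Probability (over byte words of length 4, which suffice to determine the
first two tokens) that the token sequence of the generated byte sequence starts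
with the token list `u`. -/
def tokPrefixProb (π : Bool → ℝ) (α β : ℝ) (u : List (List Bool)) : ℝ :=
  ∑ w ∈ Finset.univ.filter
      (fun w : Fin 4 → Bool => (tokAB (List.ofFn w)).take u.length = u),
    seqProb π α β (List.ofFn w)

lemma sum_fn_bool_succ (n : ℕ) (f : (Fin (n+1) → Bool) → ℝ) :
    ∑ w : Fin (n+1) → Bool, f w = ∑ b : Bool, ∑ w : Fin n → Bool, f (Fin.cons b w) := by
  rw [← (Fin.consEquiv (fun _ => Bool)).sum_comp, Fintype.sum_prod_type]
  rfl

lemma sum_fn0 (f : (Fin 0 → Bool) → ℝ) : ∑ w : Fin 0 → Bool, f w = f ![] := by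
  simp [Subsingleton.elim _ (![] : Fin 0 → Bool)]

lemma tokPrefixProb_eval (π : Bool → ℝ) (α β : ℝ) (u : List (List Bool)) :
    tokPrefixProb π α β u = ∑ w ∈ Finset.univ.filter
      (fun w : Fin 4 → Bool => (tokAB (List.ofFn w)).take u.length = u),
    seqProb π α β (List.ofFn w) := rfl

lemma eval_AA_A (π : Bool → ℝ) (α β : ℝ) :
    tokPrefixProb π α β [[true, true], [true]] = π true * (α * (α * (1 - α))) := by
  rw [tokPrefixProb_eval, Finset.sum_filter]
  simp only [sum_fn_bool_succ, sum_fn0, Fintype.sum_bool, List.ofFn_succ, Fin.cons_zero,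
    Fin.cons_succ, List.ofFn_zero, tokAB, seqProb, contProb, step]
  norm_num

lemma eval_AA_AA (π : Bool → ℝ) (α β : ℝ) :
    tokPrefixProb π α β [[true, true], [true, true]] = π true * (α * (α * α)) := by
  rw [tokPrefixProb_eval, Finset.sum_filter]
  simp only [sum_fn_bool_succ, sum_fn0, Fintype.sum_bool, List.ofFn_succ, Fin.cons_zero,
    Fin.cons_succ, List.ofFn_zero, tokAB, seqProb, contProb, step]
  norm_num

lemma eval_AA (π : Bool → ℝ) (α β : ℝ) :
    tokPrefixProb π α β [[true, true]] = π true * α := by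
  rw [tokPrefixProb_eval, Finset.sum_filter]
  simp only [sum_fn_bool_succ, sum_fn0, Fintype.sum_bool, List.ofFn_succ, Fin.cons_zero,
    Fin.cons_succ, List.ofFn_zero, tokAB, seqProb, contProb, step]
  norm_num
  ring

/-- No tokenization bias after token `AA`: in the induced token process,
`P(t₂ = A | t₁ = AA) + P(t₂ = AA | t₁ = AA)` — the probability that the next
byte after token `AA` is `A` — equals `α`. -/
theorem no_bias_after_AA (α β γ : ℝ)
    (hα0 : 0 < α) (hα1 : α < 1) (hβ0 : 0 < β) (hβ1 : β < 1)
    (hγ0 : 0 < γ) (hγ1 : γ < 1) :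
    tokPrefixProb (fun b => if b then γ else 1 - γ) α β [[true, true], [true]] /
        tokPrefixProb (fun b => if b then γ else 1 - γ) α β [[true, true]]
      + tokPrefixProb (fun b => if b then γ else 1 - γ) α β
            [[true, true], [true, true]] /
          tokPrefixProb (fun b => if b then γ else 1 - γ) α β [[true, true]]
      = α := by
  rw [eval_AA_A, eval_AA_AA, eval_AA]
  have h1 : (if true then γ else 1 - γ) = γ := rfl
  rw [h1]
  have hγ : γ ≠ 0 := ne_of_gt hγ0
  have hα : α ≠ 0 := ne_of_gt hα0
  field_simp
  ring
end

section
/- In the two-state Markov chain (transitions: from A, next is A w.p. α, B w.p. 1−α; from B, next is A w.p. β, B w.p. 1−β) tokenized with vocabulary {A, B, AA}: conditioned on the first token being the single token A, the next token is B with probability 1. In particular P(next byte = A | first token = A) = 0 ≠ α = P(x₂ = A | x₁ = A), exhibiting tokenization bias. -/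
/-- Tokenization bias after the single token `A`: conditioned on the first
token being `A`, the next token is `B` with probability `1`; in particular the
probability that the next byte is `A` given the first token is `A` equals `0`,
which differs from the byte-level conditional `P(x₂ = A | x₁ = A) = α`. -/
theorem tokenization_bias_after_A (α β γ : ℝ)
    (hα0 : 0 < α) (hα1 : α < 1) (hβ0 : 0 < β) (hβ1 : β < 1)
    (hγ0 : 0 < γ) (hγ1 : γ < 1) :
    tokPrefixProb (fun b => if b then γ else 1 - γ) α β [[true], [false]] /
        tokPrefixProb (fun b => if b then γ else 1 - γ) α β [[true]] = 1 ∧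
    (∑ w ∈ Finset.univ.filter
        (fun w : Fin 4 → Bool =>
          (tokAB (List.ofFn w)).take 1 = [[true]] ∧ w 1 = true),
      seqProb (fun b => if b then γ else 1 - γ) α β (List.ofFn w)) /
        tokPrefixProb (fun b => if b then γ else 1 - γ) α β [[true]] = 0 ∧
    step α β true true = α ∧ (0 : ℝ) ≠ α := by
  have hS : (Finset.univ.filter
      (fun w : Fin 4 → Bool => (tokAB (List.ofFn w)).take 1 = [[true]])) =
      {![true,false,false,false], ![true,false,false,true],
       ![true,false,true,false], ![true,false,true,true]} := by decide
  have hS2 : (Finset.univ.filter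
      (fun w : Fin 4 → Bool => (tokAB (List.ofFn w)).take 2 = [[true],[false]])) =
      {![true,false,false,false], ![true,false,false,true],
       ![true,false,true,false], ![true,false,true,true]} := by decide
  have hE : (Finset.univ.filter
      (fun w : Fin 4 → Bool =>
        (tokAB (List.ofFn w)).take 1 = [[true]] ∧ w 1 = true)) = ∅ := by decide
  have hsum : ∑ w ∈ ({![true,false,false,false], ![true,false,false,true],
       ![true,false,true,false], ![true,false,true,true]} : Finset (Fin 4 → Bool)),
      seqProb (fun b => if b then γ else 1 - γ) α β (List.ofFn w) = γ * (1 - α) := by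
    rw [Finset.sum_insert (by decide), Finset.sum_insert (by decide),
      Finset.sum_insert (by decide), Finset.sum_singleton,
      show List.ofFn ![true,false,false,false] = [true,false,false,false] from by decide,
      show List.ofFn ![true,false,false,true] = [true,false,false,true] from by decide,
      show List.ofFn ![true,false,true,false] = [true,false,true,false] from by decide,
      show List.ofFn ![true,false,true,true] = [true,false,true,true] from by decide]
    simp [seqProb, contProb, step]
    ring
  have hval : tokPrefixProb (fun b => if b then γ else 1 - γ) α β [[true]] = γ * (1 - α) := by
    unfold tokPrefixProb
    rw [show ([[true]] : List (List Bool)).length = 1 from rfl, hS, hsum]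
  have hval2 : tokPrefixProb (fun b => if b then γ else 1 - γ) α β [[true],[false]]
      = γ * (1 - α) := by
    unfold tokPrefixProb
    rw [show ([[true],[false]] : List (List Bool)).length = 2 from rfl, hS2, hsum]
  have hne : γ * (1 - α) ≠ 0 := mul_ne_zero (ne_of_gt hγ0) (by linarith)
  refine ⟨by rw [hval2, hval, div_self hne], ?_, rfl, by linarith⟩
  rw [hE, Finset.sum_empty, zero_div]
end
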